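/- arXiv:1908.00860 — 2 statements merged into one kernel-verified Lean document; each statement's English description precedes it below -/
import Mathlib

section
/- Let Vb be a finite linearly ordered set of Boolean skeleton variables and Vt a set of theory variables taking values in a domain D. Let F be a predicate on pairs (a, u) where a : Vb → Bool and u : Vt → D. Let σ be a permutation of Vb and τ a permutation of Vt such that F(a ∘ σ, u ∘ τ) ↔ F(a, u) for all a and u (a Boolean-skeleton-cum-theory symmetry). Define SBP(σ)(a) := for every i ∈ Vb, if a(j) = a(σ(j)) for all j < i, then a(i) = true implies a(σ(i)) = true, where Bool is ordered by false < true. Then F is satisfiable (some pair (a, u) satisfies F) if and only if the predicate (a, u) ↦ F(a, u) ∧ SBP(σ)(a) is satisfiable. -/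
/-- The Boolean symmetry breaking predicate over the Boolean skeleton variables
for a permutation `σ`: for every `i`, if `a` agrees with `a ∘ σ` on all smaller
variables, then `a i = true` implies `a (σ i) = true` (Bool ordered by
`false < true`). -/
def SBPBool {Vb : Type*} [LinearOrder Vb] (σ : Equiv.Perm Vb) (a : Vb → Bool) : Prop :=
  ∀ i : Vb, (∀ j < i, a j = a (σ j)) → (a i = true → a (σ i) = true)

/-- **Theorem 2.** Let `F` be an SMT formula over Boolean skeleton assignments
`a : Vb → Bool` and theory assignments `u : Vt → D`, and let `(σ, τ)` be a
Boolean-skeleton-cum-theory symmetry of `F`. Then `F` is satisfiable iff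
`F ∧ SBP σ` (with the SBP over only the Boolean skeleton variables) is
satisfiable. -/
theorem bst_sbp_equisatisfiable {Vb Vt D : Type*} [Fintype Vb] [LinearOrder Vb]
    (F : (Vb → Bool) → (Vt → D) → Prop)
    (σ : Equiv.Perm Vb) (τ : Equiv.Perm Vt)
    (hsym : ∀ (a : Vb → Bool) (u : Vt → D),
      F (fun x => a (σ x)) (fun y => u (τ y)) ↔ F a u) :
    (∃ (a : Vb → Bool) (u : Vt → D), F a u) ↔
      (∃ (a : Vb → Bool) (u : Vt → D), F a u ∧ SBPBool σ a) := by
  constructor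
  · rintro ⟨a₀, u₀, h₀⟩
    -- set of Lex assignments that are satisfiable
    set S : Set (Lex (Vb → Bool)) := {a | ∃ u, F (ofLex a) u} with hS
    have hne : S.Nonempty := ⟨toLex a₀, u₀, h₀⟩
    obtain ⟨a, haS, hmin⟩ := Set.exists_min_image S id S.toFinite hne
    obtain ⟨u, hu⟩ := haS
    refine ⟨ofLex a, u, hu, ?_⟩
    have hσ : toLex (fun x => (ofLex a) (σ x)) ∈ S := ⟨fun y => u (τ y), by
      simpa using (hsym (ofLex a) u).mpr hu⟩
    have hle : a ≤ toLex (fun x => (ofLex a) (σ x)) := hmin _ hσ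
    rcases eq_or_lt_of_le hle with heq | hlt
    · intro i _ hi
      have : (ofLex a) (σ i) = (ofLex a) i := congrFun (congrArg ofLex heq.symm) i
      rw [this, hi]
    · obtain ⟨i₀, hbelow, hi₀⟩ := hlt
      intro i hagree hi
      rcases lt_trichotomy i i₀ with h | rfl | h
      · have h2 : ofLex a i = ofLex a (σ i) := hbelow i h
        rw [← h2]; exact hi
      · exact Bool.lt_iff.mp hi₀ |>.2
      · exact absurd (hagree i₀ h : ofLex a i₀ = ofLex a (σ i₀)) (ne_of_lt hi₀)
  · rintro ⟨a, u, h, _⟩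
    exact ⟨a, u, h⟩
end

section
/- Let Vb be a finite linearly ordered set of Boolean skeleton variables, Vt a set of theory variables taking values in a domain D, and F a predicate on pairs (a, u) with a : Vb → Bool and u : Vt → D. Let (σ₁, τ₁), …, (σₙ, τₙ) be pairs of permutations of Vb and Vt respectively, each satisfying F(a ∘ σᵢ, u ∘ τᵢ) ↔ F(a, u) for all a and u. Then F is satisfiable if and only if the predicate (a, u) ↦ F(a, u) ∧ SBP(σ₁)(a) ∧ … ∧ SBP(σₙ)(a) is satisfiable, where SBP(σ)(a) means: for every i ∈ Vb, if a(j) = a(σ(j)) for all j < i, then a(i) = true implies a(σ(i)) = true. -/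
/-- Correctness of Algorithm 2: if `(σ 1, τ 1), …, (σ n, τ n)` are
Boolean-skeleton-cum-theory symmetries of the SMT formula `F`, then `F` is
satisfiable iff `F` conjoined with the Boolean-skeleton SBPs
`SBP (σ 1), …, SBP (σ n)` is satisfiable. -/
theorem bst_sbp_family_equisatisfiable {Vb Vt D : Type*} [Fintype Vb] [LinearOrder Vb]
    (F : (Vb → Bool) → (Vt → D) → Prop) (n : ℕ)
    (σ : Fin n → Equiv.Perm Vb) (τ : Fin n → Equiv.Perm Vt)
    (hsym : ∀ (i : Fin n) (a : Vb → Bool) (u : Vt → D),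
      F (fun x => a (σ i x)) (fun y => u (τ i y)) ↔ F a u) :
    (∃ (a : Vb → Bool) (u : Vt → D), F a u) ↔
      (∃ (a : Vb → Bool) (u : Vt → D), F a u ∧ ∀ i : Fin n, SBPBool (σ i) a) := by
  constructor
  · rintro ⟨a, u, hF⟩
    set S : Set (Lex (Vb → Bool)) := {b | ∃ u, F (ofLex b) u} with hS
    have hne : S.Nonempty := ⟨toLex a, u, hF⟩
    obtain ⟨b, hbS, hmin⟩ :=
      (IsWellFounded.wf (α := Lex (Vb → Bool)) (r := (· < ·))).has_min S hne
    obtain ⟨u', hFu'⟩ := hbS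
    refine ⟨ofLex b, u', hFu', ?_⟩
    intro i k hk hkt
    by_contra hfalse
    have hmem : toLex (fun x => ofLex b ((σ i) x)) ∈ S :=
      ⟨fun y => u' ((τ i) y), (hsym i (ofLex b) u').mpr hFu'⟩
    have hlt : toLex (fun x => ofLex b ((σ i) x)) < b := by
      refine ⟨k, fun j hj => (hk j hj).symm, ?_⟩
      simp only [Bool.not_eq_true] at hfalse
      change ofLex b ((σ i) k) < ofLex b k
      rw [hfalse, hkt]
      exact Bool.false_lt_true
    exact hmin _ hmem hlt
  · rintro ⟨a, u, h, _⟩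
    exact ⟨a, u, h⟩
end
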